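/- If A is a positive linear operator from the real Lᵖ space of a measure space to the real L^q space (1 ≤ p, q ≤ ∞), and A_ℂ is its complex-linear extension, then |A_ℂ(f + ig)| ≤ A(|f + ig|) almost everywhere, for all f, g in real Lᵖ. -/

import Mathlib

/-!
Testing `f + ig` against the unit vectors: for every angle `θ`,
`cos θ · f + sin θ · g ≤ |f + ig|`, so positivity of `A` gives
`cos θ · Af + sin θ · Ag ≤ A|f + ig|` almost everywhere. Over the countably many rational
angles these null sets can be discarded at once, and by continuity and density the bound holds
at every angle, in particular at `arg (Af + i Ag)(x)`, where the left side is `|Af + i Ag|(x)`.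
-/

open MeasureTheory Complex

namespace Complex

lemma cos_mul_re_add_sin_mul_im_le_norm (θ : ℝ) (z : ℂ) :
    Real.cos θ * z.re + Real.sin θ * z.im ≤ ‖z‖ := by
  have h := real_inner_le_norm (exp (θ * I)) z
  rw [norm_exp_ofReal_mul_I, one_mul] at h
  simp only [Complex.inner, mul_re, conj_re, conj_im, exp_ofReal_mul_I_re, exp_ofReal_mul_I_im] at h
  linarith

lemma norm_le_of_forall_rat_cos_mul_re_add_sin_mul_im_le {z : ℂ} {c : ℝ}
    (h : ∀ r : ℚ, Real.cos r * z.re + Real.sin r * z.im ≤ c) : ‖z‖ ≤ c := by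
  have hall : ∀ θ : ℝ, Real.cos θ * z.re + Real.sin θ * z.im ≤ c := by
    have hclosed : IsClosed {θ : ℝ | Real.cos θ * z.re + Real.sin θ * z.im ≤ c} :=
      isClosed_le (by fun_prop) continuous_const
    exact fun θ => Rat.denseRange_cast.induction_on θ hclosed h
  calc ‖z‖ = Real.cos (arg z) * z.re + Real.sin (arg z) * z.im := by
        rw [← norm_mul_cos_arg z, ← norm_mul_sin_arg z]
        linear_combination (-‖z‖) * Real.sin_sq_add_cos_sq (arg z)
    _ ≤ c := hall _

end Complex

namespace MeasureTheory.Lp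

variable {X Y : Type*} [MeasurableSpace X] [MeasurableSpace Y] {μ : Measure X} {ν : Measure Y}
  {p q : ENNReal}

lemma coeFn_smul_add_smul (a b : ℝ) (f g : Lp ℝ p μ) :
    ⇑(a • f + b • g) =ᵐ[μ] fun x => a * f x + b * g x := by
  filter_upwards [coeFn_add (a • f) (b • g), coeFn_smul a f, coeFn_smul b g]
    with x hsum hf hg
  rw [hsum, Pi.add_apply, hf, hg]
  rfl

lemma ae_smul_add_smul_le_of_monotone {F : Type*} [FunLike F (Lp ℝ p μ) (Lp ℝ q ν)]
    [LinearMapClass F ℝ (Lp ℝ p μ) (Lp ℝ q ν)] {A : F} (hA : Monotone A)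
    {a b : ℝ} {f g m : Lp ℝ p μ} (h : ∀ᵐ x ∂μ, a * f x + b * g x ≤ m x) :
    ∀ᵐ y ∂ν, a * A f y + b * A g y ≤ A m y := by
  have hle : a • f + b • g ≤ m := by
    rw [← coeFn_le]
    filter_upwards [coeFn_smul_add_smul a b f g, h] with x hx hle
    rwa [hx]
  have hAle := hA hle
  rw [map_add, map_smul, map_smul, ← coeFn_le] at hAle
  filter_upwards [coeFn_smul_add_smul a b (A f) (A g), hAle] with y hy hle
  rwa [← hy]

end MeasureTheory.Lp

theorem abs_complex_extension_le
    {X : Type*} [MeasurableSpace X] (μ : Measure X)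
    (p q : ENNReal) [Fact (1 ≤ p)] [Fact (1 ≤ q)]
    (A : Lp ℝ p μ →L[ℝ] Lp ℝ q μ)
    (hA : ∀ h : Lp ℝ p μ, 0 ≤ h → 0 ≤ A h)
    (f g : Lp ℝ p μ)
    (m : Lp ℝ p μ) (hm : ⇑m =ᵐ[μ] fun x => ‖(↑(f x) + ↑(g x) * Complex.I : ℂ)‖) :
    ∀ᵐ x ∂μ, ‖(↑((A f) x) + ↑((A g) x) * Complex.I : ℂ)‖ ≤ (A m) x := by
  have hmono : Monotone A := (monotone_iff_map_nonneg A).2 hA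
  have hrat : ∀ r : ℚ, ∀ᵐ x ∂μ,
      Real.cos r * A f x + Real.sin r * A g x ≤ A m x := fun r =>
    Lp.ae_smul_add_smul_le_of_monotone hmono <| hm.mono fun x hx => by
      simpa [hx] using Complex.cos_mul_re_add_sin_mul_im_le_norm r (f x + g x * I)
  filter_upwards [ae_all_iff.2 hrat] with x hx
  exact Complex.norm_le_of_forall_rat_cos_mul_re_add_sin_mul_im_le (by simpa using hx)
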